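/- arXiv:1202.4171 — 16 statements merged into one kernel-verified Lean document; each statement's English description precedes it below -/
import Mathlib

section
/- Let e, r be integers with e ≥ 0 and 0 ≤ r ≤ 2^e. Then for every integer n ≥ 0, s(2^e · n + r) = s(r)·s(n+1) + s(2^e − r)·s(n). -/
/-! Induction on `e`. Writing `r = 2k` or `r = 2k + 1`, the arguments `2^(e+1) n + r` and
`2^(e+1) - r` halve to level-`e` arguments with remainder `k` (and `k + 1`), so one application of
the recursion reduces level `e + 1` to level `e`; in the odd case the instances at `k` and `k + 1`
add up to the claimed identity. -/

section SternRecursion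

variable {s : ℕ → ℕ} {e k : ℕ}

theorem stern_two_pow_succ_mul_add_even (he : ∀ n, s (2 * n) = s n)
    (ih : ∀ r ≤ 2 ^ e, ∀ n, s (2 ^ e * n + r) = s r * s (n + 1) + s (2 ^ e - r) * s n)
    (hk : k ≤ 2 ^ e) (n : ℕ) :
    s (2 ^ (e + 1) * n + 2 * k) =
      s (2 * k) * s (n + 1) + s (2 ^ (e + 1) - 2 * k) * s n := by
  have harg : 2 ^ (e + 1) * n + 2 * k = 2 * (2 ^ e * n + k) := by ring
  have hcompl : 2 ^ (e + 1) - 2 * k = 2 * (2 ^ e - k) := by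
    rw [pow_succ', Nat.mul_sub]
  rw [harg, hcompl, he, he, he, ih k hk n]

theorem stern_two_pow_succ_mul_add_odd (ho : ∀ n, s (2 * n + 1) = s n + s (n + 1))
    (ih : ∀ r ≤ 2 ^ e, ∀ n, s (2 ^ e * n + r) = s r * s (n + 1) + s (2 ^ e - r) * s n)
    (hk : k < 2 ^ e) (n : ℕ) :
    s (2 ^ (e + 1) * n + (2 * k + 1)) =
      s (2 * k + 1) * s (n + 1) + s (2 ^ (e + 1) - (2 * k + 1)) * s n := by
  have harg : 2 ^ (e + 1) * n + (2 * k + 1) = 2 * (2 ^ e * n + k) + 1 := by ring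
  have hcompl : 2 ^ (e + 1) - (2 * k + 1) = 2 * (2 ^ e - (k + 1)) + 1 := by
    rw [pow_succ']; omega
  have hcompl_succ : 2 ^ e - (k + 1) + 1 = 2 ^ e - k := by omega
  rw [harg, hcompl, ho, ho, ho, add_assoc, ih k hk.le n, ih (k + 1) hk n, hcompl_succ]
  ring

end SternRecursion

theorem reznick (s : ℕ → ℕ) (h0 : s 0 = 0) (h1 : s 1 = 1)
    (he : ∀ n, s (2 * n) = s n) (ho : ∀ n, s (2 * n + 1) = s n + s (n + 1)) :
    ∀ e r : ℕ, r ≤ 2 ^ e → ∀ n : ℕ,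
      s (2 ^ e * n + r) = s r * s (n + 1) + s (2 ^ e - r) * s n := by
  intro e
  induction e with
  | zero =>
    intro r hr n
    interval_cases r <;> simp [h0, h1]
  | succ e ih =>
    intro r hr n
    obtain ⟨k, rfl | rfl⟩ := Nat.even_or_odd' r
    · exact stern_two_pow_succ_mul_add_even he ih (by omega) n
    · exact stern_two_pow_succ_mul_add_odd ho ih (by omega) n
end

section
/- Let e, r be integers with e ≥ 0 and 0 ≤ r ≤ 2^e. Then for every integer n ≥ 1, t(2^e · n + r) = (−1)^e · (s(r)·t(n+1) + s(2^e − r)·t(n)). -/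
/-! Induction on `e`, splitting on the parity of `r`: writing `r = 2q` or `r = 2q + 1`, the argument
`2^(e+1) n + r` is `2m` or `2m + 1` with `m = 2^e n + q`, so one application of the twisted recurrence
reduces it to level `e`. The Stern values `s r` and `s (2^(e+1) - r)` obey the matching untwisted
recurrences, since `2^(e+1) - r` has the same parity as `r`. -/

section Stern

variable {s : ℕ → ℤ} (he : ∀ n, s (2 * n) = s n) (ho : ∀ n, s (2 * n + 1) = s n + s (n + 1))
include he ho

omit ho in
lemma stern_two_pow_succ_sub_even {e q : ℕ} (hq : q ≤ 2 ^ e) :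
    s (2 ^ (e + 1) - 2 * q) = s (2 ^ e - q) := by
  rw [show 2 ^ (e + 1) - 2 * q = 2 * (2 ^ e - q) by omega, he]

omit he in
lemma stern_two_pow_succ_sub_odd {e q : ℕ} (hq : q < 2 ^ e) :
    s (2 ^ (e + 1) - (2 * q + 1)) = s (2 ^ e - (q + 1)) + s (2 ^ e - q) := by
  rw [show 2 ^ (e + 1) - (2 * q + 1) = 2 * (2 ^ e - (q + 1)) + 1 by omega, ho,
    show 2 ^ e - (q + 1) + 1 = 2 ^ e - q by omega]

end Stern

theorem twisted_reznick_general (s : ℕ → ℤ) (h0 : s 0 = 0) (h1 : s 1 = 1)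
    (he : ∀ n, s (2 * n) = s n) (ho : ∀ n, s (2 * n + 1) = s n + s (n + 1))
    (t : ℕ → ℤ)
    (te : ∀ n, 1 ≤ n → t (2 * n) = -t n) (todd : ∀ n, 1 ≤ n → t (2 * n + 1) = -t n - t (n + 1)) :
    ∀ e r : ℕ, r ≤ 2 ^ e → ∀ n : ℕ, 1 ≤ n →
      t (2 ^ e * n + r) = (-1) ^ e * (s r * t (n + 1) + s (2 ^ e - r) * t n) := by
  intro e
  induction e with
  | zero =>
    intro r hr n _
    interval_cases r <;> simp [h0, h1]
  | succ e ih =>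
    intro r hr n hn
    have hm : ∀ q, 1 ≤ 2 ^ e * n + q := fun q => by
      nlinarith [Nat.one_le_two_pow (n := e)]
    obtain ⟨q, rfl | rfl⟩ := Nat.even_or_odd' r
    · have hq : q ≤ 2 ^ e := by omega
      rw [show 2 ^ (e + 1) * n + 2 * q = 2 * (2 ^ e * n + q) by ring, te _ (hm q), ih q hq n hn,
        stern_two_pow_succ_sub_even he hq, he]
      ring
    · have hq : q < 2 ^ e := by omega
      rw [show 2 ^ (e + 1) * n + (2 * q + 1) = 2 * (2 ^ e * n + q) + 1 by ring, todd _ (hm q),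
        add_assoc, ih q hq.le n hn, ih (q + 1) hq n hn, stern_two_pow_succ_sub_odd ho hq, ho]
      ring

theorem twisted_reznick (s : ℕ → ℤ) (h0 : s 0 = 0) (h1 : s 1 = 1)
    (he : ∀ n, s (2 * n) = s n) (ho : ∀ n, s (2 * n + 1) = s n + s (n + 1))
    (t : ℕ → ℤ) (t0 : t 0 = 0) (t1 : t 1 = 1)
    (te : ∀ n, 1 ≤ n → t (2 * n) = -t n) (todd : ∀ n, 1 ≤ n → t (2 * n + 1) = -t n - t (n + 1)) :
    ∀ e r : ℕ, r ≤ 2 ^ e → ∀ n : ℕ, 1 ≤ n →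
      t (2 ^ e * n + r) = (-1) ^ e * (s r * t (n + 1) + s (2 ^ e - r) * t n) :=
  twisted_reznick_general s h0 h1 he ho t te todd
end

section
/- Let e, r be integers with e ≥ 0 and 0 ≤ r ≤ 2^e. Then for every integer n ≥ 0, s(r)·s(2n+5) + s(2^e − r)·s(2n+3) = s(2^e·(n+2)+r) + s(2^e·(n+1)+r). -/
/-! With `r + t = 2 ^ e`, induction on `e` (halving `r`, `t` and the argument) gives
`s (2 ^ e * m + r) = s r * s (m + 1) + s t * s m`. Adding its instances at `m = n + 2` and
`m = n + 1` and regrouping with `s (2 * k + 1) = s k + s (k + 1)` yields the identity. -/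

theorem stern_pow_two_mul_add_of_add_eq_pow_two (s : ℕ → ℕ) (h0 : s 0 = 0) (h1 : s 1 = 1)
    (he : ∀ n, s (2 * n) = s n) (ho : ∀ n, s (2 * n + 1) = s n + s (n + 1)) (e : ℕ)
    {r t : ℕ} (hrt : r + t = 2 ^ e) (m : ℕ) :
    s (2 ^ e * m + r) = s r * s (m + 1) + s t * s m := by
  induction e generalizing r t with
  | zero =>
    obtain ⟨rfl, rfl⟩ | ⟨rfl, rfl⟩ : r = 0 ∧ t = 1 ∨ r = 1 ∧ t = 0 := by
      rw [pow_zero] at hrt; omega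
    all_goals simp [h0, h1]
  | succ e ih =>
    rw [pow_succ] at hrt
    obtain ⟨q, rfl | rfl⟩ := Nat.even_or_odd' r
    · obtain ⟨u, rfl⟩ : ∃ u, t = 2 * u := ⟨t / 2, by omega⟩
      rw [show 2 ^ (e + 1) * m + 2 * q = 2 * (2 ^ e * m + q) by ring, he, he, he,
        ih (t := u) (by omega)]
    · obtain ⟨u, rfl⟩ : ∃ u, t = 2 * u + 1 := ⟨t / 2, by omega⟩
      rw [show 2 ^ (e + 1) * m + (2 * q + 1) = 2 * (2 ^ e * m + q) + 1 by ring, ho, ho, ho,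
        add_assoc, ih (t := u + 1) (by omega), ih (t := u) (by omega)]
      ring

theorem coons_identity (s : ℕ → ℕ) (h0 : s 0 = 0) (h1 : s 1 = 1)
    (he : ∀ n, s (2 * n) = s n) (ho : ∀ n, s (2 * n + 1) = s n + s (n + 1)) :
    ∀ e r : ℕ, r ≤ 2 ^ e → ∀ n : ℕ,
      s r * s (2 * n + 5) + s (2 ^ e - r) * s (2 * n + 3)
        = s (2 ^ e * (n + 2) + r) + s (2 ^ e * (n + 1) + r) := by
  intro e r hr n
  have hrt : r + (2 ^ e - r) = 2 ^ e := Nat.add_sub_cancel' hr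
  rw [stern_pow_two_mul_add_of_add_eq_pow_two s h0 h1 he ho e hrt,
    stern_pow_two_mul_add_of_add_eq_pow_two s h0 h1 he ho e hrt,
    show 2 * n + 5 = 2 * (n + 2) + 1 by ring, show 2 * n + 3 = 2 * (n + 1) + 1 by ring, ho, ho]
  ring
end

section
/- For all integers e ≥ 0 and all r with 0 ≤ r ≤ 2^e, the Stern sequence satisfies s(2^e + r) − s(r) = s(2^e − r). -/
/-! Induct on `e`: writing `r = 2k` or `r = 2k + 1`, Stern's recurrences reduce the indices
`2^(e+1) ± r` to `2^e ± k` and `2^e ± (k + 1)`, where the induction hypothesis applies. -/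

namespace Stern

variable {M : Type*} [AddCommMonoid M] {s : ℕ → M}

theorem two_pow_add_eq (h0 : s 0 = 0) (he : ∀ n, s (2 * n) = s n)
    (ho : ∀ n, s (2 * n + 1) = s n + s (n + 1)) (e : ℕ) :
    ∀ r ≤ 2 ^ e, s (2 ^ e + r) = s r + s (2 ^ e - r) := by
  induction e with
  | zero =>
    intro r hr
    interval_cases r
    · simp [h0]
    · simpa [h0] using he 1
  | succ e ih =>
    intro r hr
    have hpow : 2 ^ (e + 1) = 2 * 2 ^ e := by ring
    obtain ⟨k, rfl | rfl⟩ := Nat.even_or_odd' r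
    · have hsum : 2 ^ (e + 1) + 2 * k = 2 * (2 ^ e + k) := by omega
      have hdiff : 2 ^ (e + 1) - 2 * k = 2 * (2 ^ e - k) := by omega
      rw [hsum, hdiff, he, he, he]
      exact ih k (by omega)
    · have hk : k + 1 ≤ 2 ^ e := by omega
      have hsum : 2 ^ (e + 1) + (2 * k + 1) = 2 * (2 ^ e + k) + 1 := by omega
      have hdiff : 2 ^ (e + 1) - (2 * k + 1) = 2 * (2 ^ e - (k + 1)) + 1 := by omega
      have hsucc : 2 ^ e - (k + 1) + 1 = 2 ^ e - k := by omega
      rw [hsum, hdiff, ho, ho, ho, hsucc, add_assoc (2 ^ e), ih k (by omega), ih (k + 1) hk]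
      abel

end Stern

theorem stern_diff_general (s : ℕ → ℕ) (h0 : s 0 = 0)
    (he : ∀ n, s (2 * n) = s n) (ho : ∀ n, s (2 * n + 1) = s n + s (n + 1)) :
    ∀ e r : ℕ, r ≤ 2 ^ e →
      (s (2 ^ e + r) : ℤ) - s r = s (2 ^ e - r) := by
  intro e r hr
  rw [Stern.two_pow_add_eq h0 he ho e r hr, Nat.cast_add, add_sub_cancel_left]

theorem stern_diff (s : ℕ → ℕ) (h0 : s 0 = 0) (h1 : s 1 = 1)
    (he : ∀ n, s (2 * n) = s n) (ho : ∀ n, s (2 * n + 1) = s n + s (n + 1)) :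
    ∀ e r : ℕ, r ≤ 2 ^ e →
      (s (2 ^ e + r) : ℤ) - s r = s (2 ^ e - r) :=
  stern_diff_general s h0 he ho
end

section
/- For all integers e ≥ 0 and all r with 0 ≤ r ≤ 2^e, the twisted Stern sequence satisfies t(2^{e+1} + r) + t(2^e + r) = t(3·2^e − r). -/
/-!
Induct on `e`, writing `N = 2^e`. Doubling the three indices `2N + r`, `N + r`, `3N - r` of the
identity at level `N` gives the indices at level `2N` for even `r`. For odd `r = 2s + 1` the
indices at level `2N` are `2n + 1`, where `n` runs over `2N + s`, `N + s`, `3N - (s + 1)`, and the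
odd recurrence adds the identities at `s` and at `s + 1`.
-/

namespace TwistedStern

theorem add_two_mul {t : ℕ → ℤ} (te : ∀ n, 1 ≤ n → t (2 * n) = -t n) {a b c : ℕ}
    (ha : 1 ≤ a) (hb : 1 ≤ b) (hc : 1 ≤ c) (h : t a + t b = t c) :
    t (2 * a) + t (2 * b) = t (2 * c) := by
  rw [te a ha, te b hb, te c hc, ← h]
  ring

theorem add_two_mul_add_one {t : ℕ → ℤ}
    (todd : ∀ n, 1 ≤ n → t (2 * n + 1) = -t n - t (n + 1)) {a b c : ℕ}
    (ha : 1 ≤ a) (hb : 1 ≤ b) (hc : 1 ≤ c)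
    (h : t a + t b = t (c + 1)) (h' : t (a + 1) + t (b + 1) = t c) :
    t (2 * a + 1) + t (2 * b + 1) = t (2 * c + 1) := by
  rw [todd a ha, todd b hb, todd c hc, ← h, ← h']
  ring

def SumIdentity (t : ℕ → ℤ) (N : ℕ) : Prop :=
  ∀ r ≤ N, t (2 * N + r) + t (N + r) = t (3 * N - r)

theorem SumIdentity.two_mul {t : ℕ → ℤ} (te : ∀ n, 1 ≤ n → t (2 * n) = -t n)
    (todd : ∀ n, 1 ≤ n → t (2 * n + 1) = -t n - t (n + 1)) {N : ℕ} (hN : 1 ≤ N)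
    (ih : SumIdentity t N) : SumIdentity t (2 * N) := by
  intro r hr
  obtain ⟨s, rfl | rfl⟩ := Nat.even_or_odd' r
  · have key := add_two_mul te (by omega) (by omega) (by omega) (ih s (by omega))
    rwa [mul_add, mul_add 2 N, show 2 * (3 * N - s) = 3 * (2 * N) - 2 * s by omega] at key
  · have hs : t (2 * N + s) + t (N + s) = t (3 * N - (s + 1) + 1) := by
      rw [show 3 * N - (s + 1) + 1 = 3 * N - s by omega]
      exact ih s (by omega)
    have hs' : t (2 * N + s + 1) + t (N + s + 1) = t (3 * N - (s + 1)) := by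
      simpa only [add_assoc] using ih (s + 1) (by omega)
    have key := add_two_mul_add_one todd (by omega) (by omega) (by omega) hs hs'
    rwa [mul_add, mul_add 2 N, add_assoc, add_assoc,
      show 2 * (3 * N - (s + 1)) + 1 = 3 * (2 * N) - (2 * s + 1) by omega] at key

end TwistedStern

open TwistedStern in
theorem twisted_sum_general (t : ℕ → ℤ) (t1 : t 1 = 1)
    (te : ∀ n, 1 ≤ n → t (2 * n) = -t n) (todd : ∀ n, 1 ≤ n → t (2 * n + 1) = -t n - t (n + 1)) :
    ∀ e r : ℕ, r ≤ 2 ^ e →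
      t (2 ^ (e + 1) + r) + t (2 ^ e + r) = t (3 * 2 ^ e - r) := by
  intro e
  induction e with
  | zero =>
    have t2 : t 2 = -1 := by simpa [t1] using te 1 le_rfl
    have t3 : t 3 = 0 := by simpa [t1, t2] using todd 1 le_rfl
    intro r hr
    interval_cases r <;> simp [t1, t2, t3]
  | succ e ih =>
    rw [pow_succ' 2 e] at ih
    rw [pow_succ' 2 (e + 1), pow_succ' 2 e]
    exact SumIdentity.two_mul te todd Nat.one_le_two_pow ih

theorem twisted_sum (t : ℕ → ℤ) (t0 : t 0 = 0) (t1 : t 1 = 1)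
    (te : ∀ n, 1 ≤ n → t (2 * n) = -t n) (todd : ∀ n, 1 ≤ n → t (2 * n + 1) = -t n - t (n + 1)) :
    ∀ e r : ℕ, r ≤ 2 ^ e →
      t (2 ^ (e + 1) + r) + t (2 ^ e + r) = t (3 * 2 ^ e - r) :=
  twisted_sum_general t t1 te todd
end

section
/- Let e, r be integers with e ≥ 0 and 0 ≤ r ≤ 2^e. Then for every integer n ≥ 1, t(2^e · n + r) = −t(2^{e+1} + r)·t(n) − t(3·2^e − r)·t(n+1). -/
/-! Induction on `e`. Writing `r = 2s` or `r = 2s + 1`, one application of the recurrence at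
`2^(e+1) n + r` reduces it to `2^e n + s` (and `2^e n + s + 1`), where the identity holds by
induction; the same recurrence, applied to the coefficients `t (2^(e+2) + r)` and
`t (3 * 2^(e+1) - r)`, recombines the result. The case `e = 0` only needs `t 2 = -1`, `t 3 = 0`. -/

def SelfSimilarAt (t : ℕ → ℤ) (e r : ℕ) : Prop :=
  ∀ n, 1 ≤ n → t (2 ^ e * n + r) = -t (2 ^ (e + 1) + r) * t n - t (3 * 2 ^ e - r) * t (n + 1)

namespace SelfSimilarAt

variable {t : ℕ → ℤ} {e r : ℕ}

theorem zero_zero (h2 : t 2 = -1) (h3 : t 3 = 0) : SelfSimilarAt t 0 0 := by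
  intro n _
  simp [h2, h3]

theorem zero_one (h2 : t 2 = -1) (h3 : t 3 = 0) : SelfSimilarAt t 0 1 := by
  intro n _
  simp [h2, h3]

theorem two_mul (te : ∀ n, 1 ≤ n → t (2 * n) = -t n) (hr : r ≤ 2 ^ e)
    (h : SelfSimilarAt t e r) : SelfSimilarAt t (e + 1) (2 * r) := by
  intro n hn
  have he : 1 ≤ 2 ^ e := Nat.one_le_two_pow
  have hpos : 1 ≤ 2 ^ e * n + r := by nlinarith
  have hm : 2 ^ (e + 1) * n + 2 * r = 2 * (2 ^ e * n + r) := by ring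
  have ha : 2 ^ (e + 1 + 1) + 2 * r = 2 * (2 ^ (e + 1) + r) := by ring
  have hb : 3 * 2 ^ (e + 1) - 2 * r = 2 * (3 * 2 ^ e - r) := by rw [pow_succ]; omega
  rw [hm, ha, hb, te _ hpos, h n hn, te (2 ^ (e + 1) + r) (by rw [pow_succ]; omega),
    te (3 * 2 ^ e - r) (by omega)]
  ring

theorem two_mul_add_one (todd : ∀ n, 1 ≤ n → t (2 * n + 1) = -t n - t (n + 1))
    (hr : r < 2 ^ e) (h : SelfSimilarAt t e r) (h' : SelfSimilarAt t e (r + 1)) :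
    SelfSimilarAt t (e + 1) (2 * r + 1) := by
  intro n hn
  have he : 1 ≤ 2 ^ e := Nat.one_le_two_pow
  have hpos : 1 ≤ 2 ^ e * n + r := by nlinarith
  have hm : 2 ^ (e + 1) * n + (2 * r + 1) = 2 * (2 ^ e * n + r) + 1 := by ring
  have ha : 2 ^ (e + 1 + 1) + (2 * r + 1) = 2 * (2 ^ (e + 1) + r) + 1 := by ring
  have hb : 3 * 2 ^ (e + 1) - (2 * r + 1) = 2 * (3 * 2 ^ e - (r + 1)) + 1 := by
    rw [pow_succ]; omega
  have hb' : 3 * 2 ^ e - (r + 1) + 1 = 3 * 2 ^ e - r := by omega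
  rw [hm, ha, hb, todd _ hpos, todd (2 ^ (e + 1) + r) (by rw [pow_succ]; omega),
    todd (3 * 2 ^ e - (r + 1)) (by omega), hb', add_assoc, h n hn, h' n hn, add_assoc]
  ring

theorem of_le (te : ∀ n, 1 ≤ n → t (2 * n) = -t n)
    (todd : ∀ n, 1 ≤ n → t (2 * n + 1) = -t n - t (n + 1)) (h2 : t 2 = -1) (h3 : t 3 = 0)
    (hr : r ≤ 2 ^ e) : SelfSimilarAt t e r := by
  induction e generalizing r with
  | zero =>
    interval_cases r
    exacts [zero_zero h2 h3, zero_one h2 h3]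
  | succ e ih =>
    obtain ⟨s, rfl | rfl⟩ := Nat.even_or_odd' r
    · exact (ih (r := s) (by omega)).two_mul te (by omega)
    · exact (ih (r := s) (by omega)).two_mul_add_one todd (by omega) (ih (r := s + 1) (by omega))

end SelfSimilarAt

theorem twisted_self_general (t : ℕ → ℤ) (t1 : t 1 = 1)
    (te : ∀ n, 1 ≤ n → t (2 * n) = -t n) (todd : ∀ n, 1 ≤ n → t (2 * n + 1) = -t n - t (n + 1)) :
    ∀ e r : ℕ, r ≤ 2 ^ e → ∀ n : ℕ, 1 ≤ n →
      t (2 ^ e * n + r) = -t (2 ^ (e + 1) + r) * t n - t (3 * 2 ^ e - r) * t (n + 1) := by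
  have h2 : t 2 = -1 := by simpa [t1] using te 1 le_rfl
  have h3 : t 3 = 0 := by simpa [t1, h2] using todd 1 le_rfl
  intro e r hr
  exact SelfSimilarAt.of_le te todd h2 h3 hr

theorem twisted_self (t : ℕ → ℤ) (t0 : t 0 = 0) (t1 : t 1 = 1)
    (te : ∀ n, 1 ≤ n → t (2 * n) = -t n) (todd : ∀ n, 1 ≤ n → t (2 * n + 1) = -t n - t (n + 1)) :
    ∀ e r : ℕ, r ≤ 2 ^ e → ∀ n : ℕ, 1 ≤ n →
      t (2 ^ e * n + r) = -t (2 ^ (e + 1) + r) * t n - t (3 * 2 ^ e - r) * t (n + 1) :=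
  twisted_self_general t t1 te todd
end

section
/- Let e, r be integers with e ≥ 0 and 0 ≤ r ≤ 2^e. Then for every integer n ≥ 0, t(2^{e+1}+r)·t(2n+3) + t(3·2^e − r)·t(2n+5) = t(2^e·(n+2)+r) + t(2^e·(n+1)+r). -/
/-!
Write `D e r` for the difference of the two sides (for fixed `n`). Every argument of `t` in
`D (e + 1) r` is twice, or twice plus one, an argument of `t` in `D e ⌊r/2⌋`, so the recurrences
give `D (e + 1) (2s) = -D e s` and `D (e + 1) (2s + 1) = -D e s - D e (s + 1)`: the defect obeys
the recurrence of `t` itself in `r`. Induction on `e` reduces everything to `e = 0`, `r ∈ {0, 1}`,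
where the identity is the odd recurrence at `n + 1` or `n + 2`.
-/

def twistedCoonsDefect (t : ℕ → ℤ) (e n r : ℕ) : ℤ :=
  t (2 ^ (e + 1) + r) * t (2 * n + 3) + t (3 * 2 ^ e - r) * t (2 * n + 5)
    - t (2 ^ e * (n + 2) + r) - t (2 ^ e * (n + 1) + r)

section

variable {t : ℕ → ℤ} (te : ∀ n, 1 ≤ n → t (2 * n) = -t n)
  (todd : ∀ n, 1 ≤ n → t (2 * n + 1) = -t n - t (n + 1))

include te in
theorem twisted_of_eq_two_mul {k m : ℕ} (hm : 1 ≤ m) (hk : k = 2 * m) : t k = -t m :=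
  hk ▸ te m hm

include todd in
theorem twisted_of_eq_two_mul_add_one {k m : ℕ} (hm : 1 ≤ m) (hk : k = 2 * m + 1) :
    t k = -t m - t (m + 1) :=
  hk ▸ todd m hm

include te todd in
theorem twistedCoonsDefect_zero (t1 : t 1 = 1) {r : ℕ} (hr : r ≤ 1) (n : ℕ) :
    twistedCoonsDefect t 0 n r = 0 := by
  have t2 : t 2 = -1 := by rw [te 1 le_rfl, t1]
  have t3 : t 3 = 0 := by rw [todd 1 le_rfl, t1, t2]; norm_num
  have h3 := twisted_of_eq_two_mul_add_one todd (k := 2 * n + 3) (m := n + 1) (by omega) (by ring)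
  have h5 := twisted_of_eq_two_mul_add_one todd (k := 2 * n + 5) (m := n + 2) (by omega) (by ring)
  interval_cases r <;>
    norm_num [twistedCoonsDefect, t2, t3, h3, h5]

include te in
theorem twistedCoonsDefect_succ_even {e s : ℕ} (hs : s ≤ 2 ^ e) (n : ℕ) :
    twistedCoonsDefect t (e + 1) n (2 * s) = -twistedCoonsDefect t e n s := by
  have hpow : 1 ≤ 2 ^ e := Nat.one_le_two_pow
  have h1 := twisted_of_eq_two_mul te (k := 2 ^ (e + 1 + 1) + 2 * s) (m := 2 ^ (e + 1) + s)
    (by omega) (by ring)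
  have h2 := twisted_of_eq_two_mul te (k := 3 * 2 ^ (e + 1) - 2 * s) (m := 3 * 2 ^ e - s)
    (by omega) (by rw [pow_succ]; omega)
  have h3 := twisted_of_eq_two_mul te (k := 2 ^ (e + 1) * (n + 2) + 2 * s)
    (m := 2 ^ e * (n + 2) + s) (by nlinarith) (by ring)
  have h4 := twisted_of_eq_two_mul te (k := 2 ^ (e + 1) * (n + 1) + 2 * s)
    (m := 2 ^ e * (n + 1) + s) (by nlinarith) (by ring)
  unfold twistedCoonsDefect
  linear_combination t (2 * n + 3) * h1 + t (2 * n + 5) * h2 - h3 - h4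

include todd in
theorem twistedCoonsDefect_succ_odd {e s : ℕ} (hs : s + 1 ≤ 2 ^ e) (n : ℕ) :
    twistedCoonsDefect t (e + 1) n (2 * s + 1)
      = -twistedCoonsDefect t e n s - twistedCoonsDefect t e n (s + 1) := by
  have h1 := twisted_of_eq_two_mul_add_one todd (k := 2 ^ (e + 1 + 1) + (2 * s + 1))
    (m := 2 ^ (e + 1) + s) (by omega) (by ring)
  have h2 := twisted_of_eq_two_mul_add_one todd (k := 3 * 2 ^ (e + 1) - (2 * s + 1))
    (m := 3 * 2 ^ e - (s + 1)) (by omega) (by rw [pow_succ]; omega)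
  have h3 := twisted_of_eq_two_mul_add_one todd (k := 2 ^ (e + 1) * (n + 2) + (2 * s + 1))
    (m := 2 ^ e * (n + 2) + s) (by nlinarith) (by ring)
  have h4 := twisted_of_eq_two_mul_add_one todd (k := 2 ^ (e + 1) * (n + 1) + (2 * s + 1))
    (m := 2 ^ e * (n + 1) + s) (by nlinarith) (by ring)
  rw [show 3 * 2 ^ e - (s + 1) + 1 = 3 * 2 ^ e - s by omega] at h2
  unfold twistedCoonsDefect
  linear_combination t (2 * n + 3) * h1 + t (2 * n + 5) * h2 - h3 - h4

include te todd in
theorem twistedCoonsDefect_eq_zero (t1 : t 1 = 1) (e : ℕ) :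
    ∀ r ≤ 2 ^ e, ∀ n, twistedCoonsDefect t e n r = 0 := by
  induction e with
  | zero => exact fun r hr n ↦ twistedCoonsDefect_zero te todd t1 hr n
  | succ e ih =>
    intro r hr n
    obtain ⟨s, rfl | rfl⟩ := Nat.even_or_odd' r
    · rw [twistedCoonsDefect_succ_even te (by omega), ih s (by omega), neg_zero]
    · rw [twistedCoonsDefect_succ_odd todd (by omega), ih s (by omega), ih (s + 1) (by omega)]
      simp

end

theorem twisted_coons_general (t : ℕ → ℤ) (t1 : t 1 = 1)
    (te : ∀ n, 1 ≤ n → t (2 * n) = -t n) (todd : ∀ n, 1 ≤ n → t (2 * n + 1) = -t n - t (n + 1)) :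
    ∀ e r : ℕ, r ≤ 2 ^ e → ∀ n : ℕ,
      t (2 ^ (e + 1) + r) * t (2 * n + 3) + t (3 * 2 ^ e - r) * t (2 * n + 5)
        = t (2 ^ e * (n + 2) + r) + t (2 ^ e * (n + 1) + r) := by
  intro e r hr n
  have h := twistedCoonsDefect_eq_zero te todd t1 e r hr n
  unfold twistedCoonsDefect at h
  linarith

theorem twisted_coons (t : ℕ → ℤ) (t0 : t 0 = 0) (t1 : t 1 = 1)
    (te : ∀ n, 1 ≤ n → t (2 * n) = -t n) (todd : ∀ n, 1 ≤ n → t (2 * n + 1) = -t n - t (n + 1)) :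
    ∀ e r : ℕ, r ≤ 2 ^ e → ∀ n : ℕ,
      t (2 ^ (e + 1) + r) * t (2 * n + 3) + t (3 * 2 ^ e - r) * t (2 * n + 5)
        = t (2 ^ e * (n + 2) + r) + t (2 ^ e * (n + 1) + r) :=
  twisted_coons_general t t1 te todd
end

section
/- Let v : ℕ → ℝ be a sequence such that there exist n₀ ≥ 0 and real numbers a, b, c with v(2n) = a·v(n) and v(2n+1) = b·v(n) + c·v(n+1) for all n ≥ n₀. Then for all integers e ≥ 0 and r with 0 ≤ r ≤ 2^e, there exist real numbers A and B such that for all n ≥ n₀, v(2^e·n + r) = A·v(n) + B·v(n+1). -/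
/-!
Write `2^(e+1) n + r` as `2 (2^e n + q)` or `2 (2^e n + q) + 1` according to the parity of `r`.
Since `2^e n + q ≥ n ≥ n₀`, one application of the recurrence expresses `v (2^(e+1) n + r)`
linearly through `v (2^e n + q)` and `v (2^e n + q + 1)`, which by induction on `e` are
themselves linear combinations of `v n` and `v (n + 1)`.
-/

def LinearInConsecutive (v : ℕ → ℝ) (n₀ : ℕ) (f : ℕ → ℝ) : Prop :=
  ∃ A B : ℝ, ∀ n, n₀ ≤ n → f n = A * v n + B * v (n + 1)

namespace LinearInConsecutive

variable {v : ℕ → ℝ} {n₀ : ℕ} {f g : ℕ → ℝ}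

theorem const_mul (hf : LinearInConsecutive v n₀ f) (t : ℝ) :
    LinearInConsecutive v n₀ (fun n ↦ t * f n) := by
  obtain ⟨A, B, hAB⟩ := hf
  exact ⟨t * A, t * B, fun n hn ↦ by dsimp only; rw [hAB n hn]; ring⟩

theorem add (hf : LinearInConsecutive v n₀ f) (hg : LinearInConsecutive v n₀ g) :
    LinearInConsecutive v n₀ (fun n ↦ f n + g n) := by
  obtain ⟨A, B, hAB⟩ := hf
  obtain ⟨A', B', hAB'⟩ := hg
  exact ⟨A + A', B + B', fun n hn ↦ by dsimp only; rw [hAB n hn, hAB' n hn]; ring⟩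

theorem congr (hf : LinearInConsecutive v n₀ f) (hfg : ∀ n, n₀ ≤ n → f n = g n) :
    LinearInConsecutive v n₀ g := by
  obtain ⟨A, B, hAB⟩ := hf
  exact ⟨A, B, fun n hn ↦ (hfg n hn).symm.trans (hAB n hn)⟩

theorem self : LinearInConsecutive v n₀ v :=
  ⟨1, 0, fun n _ ↦ by ring⟩

theorem shift_one : LinearInConsecutive v n₀ (fun n ↦ v (n + 1)) :=
  ⟨0, 1, fun n _ ↦ by ring⟩

end LinearInConsecutive

theorem le_two_pow_mul_add (e n q : ℕ) : n ≤ 2 ^ e * n + q :=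
  (Nat.le_mul_of_pos_left n (by positivity)).trans (Nat.le_add_right _ _)

section DyadicStep

variable {v : ℕ → ℝ} {n₀ : ℕ} {e q : ℕ}

theorem linearInConsecutive_even_step {a : ℝ}
    (he : ∀ n, n₀ ≤ n → v (2 * n) = a * v n)
    (hq : LinearInConsecutive v n₀ (fun n ↦ v (2 ^ e * n + q))) :
    LinearInConsecutive v n₀ (fun n ↦ v (2 ^ (e + 1) * n + 2 * q)) := by
  refine (hq.const_mul a).congr fun n hn ↦ ?_
  rw [← he _ (hn.trans (le_two_pow_mul_add e n q))]
  congr 1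
  ring

theorem linearInConsecutive_odd_step {b c : ℝ}
    (ho : ∀ n, n₀ ≤ n → v (2 * n + 1) = b * v n + c * v (n + 1))
    (hq : LinearInConsecutive v n₀ (fun n ↦ v (2 ^ e * n + q)))
    (hq' : LinearInConsecutive v n₀ (fun n ↦ v (2 ^ e * n + (q + 1)))) :
    LinearInConsecutive v n₀ (fun n ↦ v (2 ^ (e + 1) * n + (2 * q + 1))) := by
  refine ((hq.const_mul b).add (hq'.const_mul c)).congr fun n hn ↦ ?_
  rw [← add_assoc, ← ho _ (hn.trans (le_two_pow_mul_add e n q))]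
  congr 1
  ring

end DyadicStep

theorem linearInConsecutive_dyadic {v : ℕ → ℝ} {n₀ : ℕ} {a b c : ℝ}
    (he : ∀ n, n₀ ≤ n → v (2 * n) = a * v n)
    (ho : ∀ n, n₀ ≤ n → v (2 * n + 1) = b * v n + c * v (n + 1)) :
    ∀ e r : ℕ, r ≤ 2 ^ e → LinearInConsecutive v n₀ (fun n ↦ v (2 ^ e * n + r)) := by
  intro e
  induction e with
  | zero =>
    intro r hr
    interval_cases r
    · exact LinearInConsecutive.self.congr fun n _ ↦ by simp
    · exact LinearInConsecutive.shift_one.congr fun n _ ↦ by simp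
  | succ e ih =>
    intro r hr
    obtain ⟨q, rfl | rfl⟩ := Nat.even_or_odd' r
    · exact linearInConsecutive_even_step he (ih q (by omega))
    · exact linearInConsecutive_odd_step ho (ih q (by omega)) (ih (q + 1) (by omega))

theorem general_rec (v : ℕ → ℝ) (n₀ : ℕ) (a b c : ℝ)
    (he : ∀ n, n₀ ≤ n → v (2 * n) = a * v n)
    (ho : ∀ n, n₀ ≤ n → v (2 * n + 1) = b * v n + c * v (n + 1)) :
    ∀ e r : ℕ, r ≤ 2 ^ e → ∃ A B : ℝ, ∀ n, n₀ ≤ n →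
      v (2 ^ e * n + r) = A * v n + B * v (n + 1) :=
  linearInConsecutive_dyadic he ho
end

section
/- Let v : ℕ → ℝ satisfy v(2n) = a·v(n) and v(2n+1) = b·v(n) + c·v(n+1) for all n ≥ n₀. Then for all integers e ≥ 0 and r with 0 ≤ r ≤ 2^e, there exist real numbers A, B such that for all n ≥ n₀, A·v(2n+3) + B·v(2n+5) = c·v(2^e·(n+2)+r) + b·v(2^e·(n+1)+r). -/
/-!
Restricted to `n ≥ n₀`, the functions `n ↦ c·v(2^e(n+2)+r) + b·v(2^e(n+1)+r)` satisfy the same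
recurrence in `(e, r)` as `v` does: passing from `e` to `e + 1` multiplies the one with parameter
`r` by `a` when `r` is even, and when `r = 2s + 1` gives `b` times the one at `s` plus `c` times the
one at `s + 1`. By induction on `e` they all lie in the span of the two with `e = 0`, which are
`v(2n+3)` and `v(2n+5)`.
-/

open Submodule

namespace GeneralCoons

variable {v : ℕ → ℝ} {n₀ : ℕ} {a b c : ℝ}

theorem le_two_pow_mul_add {m : ℕ} (hm : n₀ ≤ m) (e s : ℕ) : n₀ ≤ 2 ^ e * m + s :=
  hm.trans ((Nat.le_mul_of_pos_left m (by positivity)).trans (Nat.le_add_right _ s))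

theorem apply_two_pow_succ_mul_add_two_mul (he : ∀ n, n₀ ≤ n → v (2 * n) = a * v n)
    {m : ℕ} (hm : n₀ ≤ m) (e s : ℕ) :
    v (2 ^ (e + 1) * m + 2 * s) = a * v (2 ^ e * m + s) := by
  rw [← he _ (le_two_pow_mul_add hm e s)]
  ring_nf

theorem apply_two_pow_succ_mul_add_two_mul_add_one
    (ho : ∀ n, n₀ ≤ n → v (2 * n + 1) = b * v n + c * v (n + 1))
    {m : ℕ} (hm : n₀ ≤ m) (e s : ℕ) :
    v (2 ^ (e + 1) * m + (2 * s + 1)) = b * v (2 ^ e * m + s) + c * v (2 ^ e * m + (s + 1)) := by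
  rw [← add_assoc _ s 1, ← ho _ (le_two_pow_mul_add hm e s)]
  ring_nf

variable (v n₀ b c) in
def coonsComb (e r : ℕ) (n : Set.Ici n₀) : ℝ :=
  c * v (2 ^ e * (n + 2) + r) + b * v (2 ^ e * (n + 1) + r)

theorem coonsComb_succ_two_mul (he : ∀ n, n₀ ≤ n → v (2 * n) = a * v n) (e s : ℕ) :
    coonsComb v n₀ b c (e + 1) (2 * s) = a • coonsComb v n₀ b c e s := by
  funext ⟨n, hn⟩
  have hn : n₀ ≤ n := hn
  simp only [coonsComb, Pi.smul_apply, smul_eq_mul]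
  rw [apply_two_pow_succ_mul_add_two_mul he (by omega), apply_two_pow_succ_mul_add_two_mul he (by omega)]
  ring

theorem coonsComb_succ_two_mul_add_one
    (ho : ∀ n, n₀ ≤ n → v (2 * n + 1) = b * v n + c * v (n + 1)) (e s : ℕ) :
    coonsComb v n₀ b c (e + 1) (2 * s + 1) =
      b • coonsComb v n₀ b c e s + c • coonsComb v n₀ b c e (s + 1) := by
  funext ⟨n, hn⟩
  have hn : n₀ ≤ n := hn
  simp only [coonsComb, Pi.add_apply, Pi.smul_apply, smul_eq_mul]
  rw [apply_two_pow_succ_mul_add_two_mul_add_one ho (by omega),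
    apply_two_pow_succ_mul_add_two_mul_add_one ho (by omega)]
  ring

theorem coonsComb_zero_zero (ho : ∀ n, n₀ ≤ n → v (2 * n + 1) = b * v n + c * v (n + 1)) :
    coonsComb v n₀ b c 0 0 = fun n : Set.Ici n₀ => v (2 * n + 3) := by
  funext ⟨n, hn⟩
  have hn : n₀ ≤ n := hn
  simp only [coonsComb, pow_zero, one_mul, add_zero]
  rw [show 2 * n + 3 = 2 * (n + 1) + 1 by ring, ho _ (by omega)]
  ring

theorem coonsComb_zero_one (ho : ∀ n, n₀ ≤ n → v (2 * n + 1) = b * v n + c * v (n + 1)) :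
    coonsComb v n₀ b c 0 1 = fun n : Set.Ici n₀ => v (2 * n + 5) := by
  funext ⟨n, hn⟩
  have hn : n₀ ≤ n := hn
  simp only [coonsComb, pow_zero, one_mul]
  rw [show 2 * n + 5 = 2 * (n + 2) + 1 by ring, ho _ (by omega)]
  ring

theorem coonsComb_mem_span (he : ∀ n, n₀ ≤ n → v (2 * n) = a * v n)
    (ho : ∀ n, n₀ ≤ n → v (2 * n + 1) = b * v n + c * v (n + 1)) (e : ℕ) :
    ∀ r ≤ 2 ^ e, coonsComb v n₀ b c e r ∈
      span ℝ {coonsComb v n₀ b c 0 0, coonsComb v n₀ b c 0 1} := by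
  induction e with
  | zero =>
    intro r hr
    interval_cases r <;> exact subset_span (by simp)
  | succ e ih =>
    intro r hr
    rw [pow_succ] at hr
    obtain ⟨s, rfl | rfl⟩ := Nat.even_or_odd' r
    · rw [coonsComb_succ_two_mul he]
      exact smul_mem _ _ (ih s (by omega))
    · rw [coonsComb_succ_two_mul_add_one ho]
      exact add_mem (smul_mem _ _ (ih s (by omega))) (smul_mem _ _ (ih (s + 1) (by omega)))

end GeneralCoons

open GeneralCoons in
theorem general_coons (v : ℕ → ℝ) (n₀ : ℕ) (a b c : ℝ)
    (he : ∀ n, n₀ ≤ n → v (2 * n) = a * v n)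
    (ho : ∀ n, n₀ ≤ n → v (2 * n + 1) = b * v n + c * v (n + 1)) :
    ∀ e r : ℕ, r ≤ 2 ^ e → ∃ A B : ℝ, ∀ n, n₀ ≤ n →
      A * v (2 * n + 3) + B * v (2 * n + 5)
        = c * v (2 ^ e * (n + 2) + r) + b * v (2 ^ e * (n + 1) + r) := by
  intro e r hr
  obtain ⟨A, B, hAB⟩ := mem_span_pair.1 (coonsComb_mem_span he ho e r hr)
  rw [coonsComb_zero_zero ho, coonsComb_zero_one ho] at hAB
  exact ⟨A, B, fun n hn => congrFun hAB ⟨n, hn⟩⟩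
end

section
/- Let z₃ : ℕ → ℤ be defined by z₃(0)=0, z₃(1)=1, and for n ≥ 1, z₃(2n) = −z₃(n), z₃(2n+1) = z₃(n) + z₃(n+1). Then z₃ is 3-periodic with period (0, 1, −1), i.e., z₃(3j)=0, z₃(3j+1)=1, z₃(3j+2)=−1 for all j ≥ 0. -/
/-!
Both `z₃` and `n ↦ sign3 (n mod 3)`, where `sign3 = (0, 1, -1)` is the Legendre symbol `(· / 3)`,
satisfy the recurrence; for `sign3` this is a finite check on the three residues. For `n ≥ 2` the
recurrence expresses the value at `n` through values at smaller positive indices, so a solution is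
determined by its values at `0` and `1`.
-/

def IsZ3Recurrence {α : Type*} [Neg α] [Add α] (f : ℕ → α) : Prop :=
  (∀ n, 1 ≤ n → f (2 * n) = -f n) ∧ ∀ n, 1 ≤ n → f (2 * n + 1) = f n + f (n + 1)

theorem IsZ3Recurrence.eq {α : Type*} [Neg α] [Add α] {f g : ℕ → α}
    (hf : IsZ3Recurrence f) (hg : IsZ3Recurrence g) (h0 : f 0 = g 0) (h1 : f 1 = g 1) :
    f = g := by
  funext n
  induction n using Nat.strong_induction_on with
  | _ n ih =>
    match n with
    | 0 => exact h0
    | 1 => exact h1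
    | n + 2 =>
      obtain ⟨m, hm | hm⟩ := Nat.even_or_odd' (n + 2)
      · rw [hm, hf.1 m (by omega), hg.1 m (by omega), ih m (by omega)]
      · rw [hm, hf.2 m (by omega), hg.2 m (by omega), ih m (by omega), ih (m + 1) (by omega)]

def sign3 : ZMod 3 → ℤ := ![0, 1, -1]

theorem isZ3Recurrence_sign3 : IsZ3Recurrence fun n : ℕ ↦ sign3 n := by
  have h_even : ∀ x : ZMod 3, sign3 (2 * x) = -sign3 x := by decide
  have h_odd : ∀ x : ZMod 3, sign3 (2 * x + 1) = sign3 x + sign3 (x + 1) := by decide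
  exact ⟨fun n _ ↦ by push_cast; exact h_even n, fun n _ ↦ by push_cast; exact h_odd n⟩

theorem z3_periodic (z₃ : ℕ → ℤ) (h0 : z₃ 0 = 0) (h1 : z₃ 1 = 1)
    (he : ∀ n, 1 ≤ n → z₃ (2 * n) = -z₃ n)
    (ho : ∀ n, 1 ≤ n → z₃ (2 * n + 1) = z₃ n + z₃ (n + 1)) :
    ∀ j : ℕ, z₃ (3 * j) = 0 ∧ z₃ (3 * j + 1) = 1 ∧ z₃ (3 * j + 2) = -1 := by
  have hz : z₃ = fun n : ℕ ↦ sign3 n :=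
    IsZ3Recurrence.eq ⟨he, ho⟩ isZ3Recurrence_sign3 h0 h1
  intro j
  have h3j : ((3 * j : ℕ) : ZMod 3) = 0 := by
    rw [ZMod.natCast_eq_zero_iff]
    exact dvd_mul_right 3 j
  simp only [hz, Nat.cast_add, h3j, zero_add]
  exact ⟨rfl, rfl, rfl⟩
end

section
/- Let z₁ : ℕ → ℤ be defined by z₁(0)=0, z₁(1)=1, and for n ≥ 0, z₁(2n)=z₁(n), z₁(2n+1)=−z₁(n)+z₁(n+1). Then for all e ≥ 0, 0 ≤ r ≤ 2^e, and n ≥ 0, z₁(2^e·n + r) = z₁(2^{e+1} + r)·z₁(n) + z₁(r)·z₁(n+1). -/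
/-!
Induction on `e`. Splitting `r` by parity, the recursion for `z₁` reduces the identity at
`e + 1` to the identities at `e` for `⌊r/2⌋` and `⌈r/2⌉`, both of which are at most `2 ^ e`;
the case `e = 0` only needs `z₁ 2 = 1` and `z₁ 3 = 0`.
-/

def SplitsAtTwoPow (z : ℕ → ℤ) (e : ℕ) : Prop :=
  ∀ r ≤ 2 ^ e, ∀ n, z (2 ^ e * n + r) = z (2 ^ (e + 1) + r) * z n + z r * z (n + 1)

section

variable {z : ℕ → ℤ}

theorem splitsAtTwoPow_zero (h0 : z 0 = 0) (h1 : z 1 = 1) (he : ∀ n, z (2 * n) = z n)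
    (ho : ∀ n, z (2 * n + 1) = -z n + z (n + 1)) : SplitsAtTwoPow z 0 := by
  have z_two : z 2 = 1 := by simpa [h1] using he 1
  have z_three : z 3 = 0 := by simpa [h1, z_two] using ho 1
  intro r hr n
  interval_cases r
  · simp [h0, z_two]
  · simp [h1, z_three]

theorem SplitsAtTwoPow.succ (he : ∀ n, z (2 * n) = z n)
    (ho : ∀ n, z (2 * n + 1) = -z n + z (n + 1)) {e : ℕ} (ih : SplitsAtTwoPow z e) :
    SplitsAtTwoPow z (e + 1) := by
  intro r hr n
  have double (a b : ℕ) : 2 ^ (e + 1) * a + 2 * b = 2 * (2 ^ e * a + b) := by ring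
  have top : 2 ^ (e + 1 + 1) = 2 ^ (e + 1) * 2 := pow_succ 2 (e + 1)
  obtain ⟨q, rfl | rfl⟩ := Nat.even_or_odd' r
  · have hq : q ≤ 2 ^ e := by rw [pow_succ] at hr; omega
    rw [double, top, double, ← pow_succ, he, he, he, ih q hq]
  · have hq : q + 1 ≤ 2 ^ e := by rw [pow_succ] at hr; omega
    rw [← add_assoc, double, top, ← add_assoc, double, ← pow_succ, ho, ho, ho,
      add_assoc _ q, add_assoc _ q, ih q (by omega), ih (q + 1) hq]
    ring

end

theorem z1_formula (z₁ : ℕ → ℤ) (h0 : z₁ 0 = 0) (h1 : z₁ 1 = 1)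
    (he : ∀ n, z₁ (2 * n) = z₁ n)
    (ho : ∀ n, z₁ (2 * n + 1) = -z₁ n + z₁ (n + 1)) :
    ∀ e r : ℕ, r ≤ 2 ^ e → ∀ n : ℕ,
      z₁ (2 ^ e * n + r) = z₁ (2 ^ (e + 1) + r) * z₁ n + z₁ r * z₁ (n + 1) := by
  suffices ∀ e, SplitsAtTwoPow z₁ e from this
  intro e
  induction e with
  | zero => exact splitsAtTwoPow_zero h0 h1 he ho
  | succ e ih => exact ih.succ he ho
end

section
/- Let z₂ : ℕ → ℤ be defined by z₂(0)=0, z₂(1)=1, and for n ≥ 0, z₂(2n)=−z₂(n), z₂(2n+1)=−z₂(n)+z₂(n+1). Then for all e ≥ 0 and 0 ≤ r ≤ 2^e, z₂(2^e + r) − z₂(r) = −z₂(5·2^e + r). -/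
/-!
Put `D e r = z₂ (2^e + r) - z₂ r + z₂ (5·2^e + r)`. Since `2^(e+1)` and `5·2^(e+1)` are even, the
recurrences of `z₂` pass to `D`: `D (e+1) (2q) = -D e q` and `D (e+1) (2q+1) = -D e q + D e (q+1)`.
So `D (e+1)` vanishes on `[0, 2^(e+1)]` as soon as `D e` vanishes on `[0, 2^e]`, and the base case
`D 0 0 = D 0 1 = 0` is a short computation.
-/

def shiftDefect (z : ℕ → ℤ) (e r : ℕ) : ℤ :=
  z (2 ^ e + r) - z r + z (5 * 2 ^ e + r)

section

variable {z : ℕ → ℤ}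

theorem shiftDefect_succ_even (he : ∀ n, z (2 * n) = -z n) (e q : ℕ) :
    shiftDefect z (e + 1) (2 * q) = -shiftDefect z e q := by
  have h₁ : 2 ^ (e + 1) + 2 * q = 2 * (2 ^ e + q) := by ring
  have h₂ : 5 * 2 ^ (e + 1) + 2 * q = 2 * (5 * 2 ^ e + q) := by ring
  simp only [shiftDefect, h₁, h₂, he]
  ring

theorem shiftDefect_succ_odd (ho : ∀ n, z (2 * n + 1) = -z n + z (n + 1)) (e q : ℕ) :
    shiftDefect z (e + 1) (2 * q + 1) = -shiftDefect z e q + shiftDefect z e (q + 1) := by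
  have h₁ : 2 ^ (e + 1) + (2 * q + 1) = 2 * (2 ^ e + q) + 1 := by ring
  have h₂ : 5 * 2 ^ (e + 1) + (2 * q + 1) = 2 * (5 * 2 ^ e + q) + 1 := by ring
  simp only [shiftDefect, h₁, h₂, ho, ← add_assoc]
  ring

variable (he : ∀ n, z (2 * n) = -z n) (ho : ∀ n, z (2 * n + 1) = -z n + z (n + 1))
include he ho

theorem shiftDefect_zero (r : ℕ) (hr : r ≤ 1) : shiftDefect z 0 r = 0 := by
  have h0 : z 0 = 0 := by linarith [he 0]
  have h3 : z 3 = -z 1 + z 2 := ho 1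
  have h5 : z 5 = -z 2 + z 3 := ho 2
  have h6 : z 6 = -z 3 := he 3
  interval_cases r <;> norm_num [shiftDefect] <;> linarith

theorem shiftDefect_eq_zero (e r : ℕ) (hr : r ≤ 2 ^ e) : shiftDefect z e r = 0 := by
  induction e generalizing r with
  | zero => exact shiftDefect_zero he ho r hr
  | succ e ih =>
    rw [pow_succ] at hr
    obtain ⟨q, rfl | rfl⟩ := Nat.even_or_odd' r
    · rw [shiftDefect_succ_even he, ih q (by omega), neg_zero]
    · rw [shiftDefect_succ_odd ho, ih q (by omega), ih (q + 1) (by omega), neg_zero, add_zero]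

end

theorem z2_diff_general (z₂ : ℕ → ℤ)
    (he : ∀ n, z₂ (2 * n) = -z₂ n)
    (ho : ∀ n, z₂ (2 * n + 1) = -z₂ n + z₂ (n + 1)) :
    ∀ e r : ℕ, r ≤ 2 ^ e →
      z₂ (2 ^ e + r) - z₂ r = -z₂ (5 * 2 ^ e + r) := by
  intro e r hr
  have h := shiftDefect_eq_zero he ho e r hr
  rw [shiftDefect] at h
  linarith

theorem z2_diff (z₂ : ℕ → ℤ) (h0 : z₂ 0 = 0) (h1 : z₂ 1 = 1)
    (he : ∀ n, z₂ (2 * n) = -z₂ n)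
    (ho : ∀ n, z₂ (2 * n + 1) = -z₂ n + z₂ (n + 1)) :
    ∀ e r : ℕ, r ≤ 2 ^ e →
      z₂ (2 ^ e + r) - z₂ r = -z₂ (5 * 2 ^ e + r) :=
  z2_diff_general z₂ he ho
end

section
/- Let z₃ : ℕ → ℤ be defined by z₃(0)=0, z₃(1)=1, and for n ≥ 1, z₃(2n)=−z₃(n), z₃(2n+1)=z₃(n)+z₃(n+1). Then for all e ≥ 0, 0 ≤ r ≤ 2^e, and n ≥ 0, z₃(2^e·n + r) = −z₃(2^{e+1} + r)·z₃(n) + z₃(r)·z₃(n+1). -/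
/-!
Fix `x` and put `F_x(e, r) = z₃(2^e x + r)`. Halving the argument gives
`F_x(e+1, 2s) = -F_x(e, s)` and `F_x(e+1, 2s+1) = F_x(e, s) + F_x(e, s+1)`, a recursion in `(e, r)`
that does not depend on `x` and is linear. The claim is `F_n = -z₃(n) F_2 + z₃(n+1) F_0` on
`0 ≤ r ≤ 2^e`, so it propagates from `e = 0`, where it reduces to `z₃ 2 = -1` and `z₃ 3 = 0`.
-/

section

variable {z : ℕ → ℤ}

lemma apply_two_mul_of_forall_pos (h0 : z 0 = 0) (he : ∀ n, 1 ≤ n → z (2 * n) = -z n) (n : ℕ) :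
    z (2 * n) = -z n := by
  rcases Nat.eq_zero_or_pos n with rfl | hn
  · simp [h0]
  · exact he n hn

lemma apply_two_mul_add_one_of_forall_pos (h0 : z 0 = 0) (h1 : z 1 = 1)
    (ho : ∀ n, 1 ≤ n → z (2 * n + 1) = z n + z (n + 1)) (n : ℕ) :
    z (2 * n + 1) = z n + z (n + 1) := by
  rcases Nat.eq_zero_or_pos n with rfl | hn
  · simp [h0, h1]
  · exact ho n hn

lemma apply_two_pow_succ_mul_add_two_mul (he : ∀ n, z (2 * n) = -z n) (e x s : ℕ) :
    z (2 ^ (e + 1) * x + 2 * s) = -z (2 ^ e * x + s) := by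
  rw [← he]; ring_nf

lemma apply_two_pow_succ_mul_add_two_mul_add_one
    (ho : ∀ n, z (2 * n + 1) = z n + z (n + 1)) (e x s : ℕ) :
    z (2 ^ (e + 1) * x + (2 * s + 1)) = z (2 ^ e * x + s) + z (2 ^ e * x + (s + 1)) := by
  rw [← add_assoc (2 ^ e * x) s 1, ← ho]; ring_nf

theorem apply_two_pow_mul_add (h1 : z 1 = 1) (he : ∀ n, z (2 * n) = -z n)
    (ho : ∀ n, z (2 * n + 1) = z n + z (n + 1)) (n e r : ℕ) (hr : r ≤ 2 ^ e) :
    z (2 ^ e * n + r) = -z (2 ^ e * 2 + r) * z n + z (2 ^ e * 0 + r) * z (n + 1) := by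
  induction e generalizing r with
  | zero =>
    have h0 : z 0 = 0 := by linarith [he 0]
    have h2 : z 2 = -1 := by simpa [h1] using he 1
    have h3 : z 3 = 0 := by simpa [h1, h2] using ho 1
    interval_cases r <;> simp [h0, h1, h2, h3]
  | succ e ih =>
    obtain ⟨s, rfl | rfl⟩ := Nat.even_or_odd' r
    · simp only [apply_two_pow_succ_mul_add_two_mul he, ih s (by omega)]
      ring
    · simp only [apply_two_pow_succ_mul_add_two_mul_add_one ho, ih s (by omega),
        ih (s + 1) (by omega)]
      ring

end

theorem z3_formula (z₃ : ℕ → ℤ) (h0 : z₃ 0 = 0) (h1 : z₃ 1 = 1)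
    (he : ∀ n, 1 ≤ n → z₃ (2 * n) = -z₃ n)
    (ho : ∀ n, 1 ≤ n → z₃ (2 * n + 1) = z₃ n + z₃ (n + 1)) :
    ∀ e r : ℕ, r ≤ 2 ^ e → ∀ n : ℕ,
      z₃ (2 ^ e * n + r) = -z₃ (2 ^ (e + 1) + r) * z₃ n + z₃ r * z₃ (n + 1) := by
  intro e r hr n
  simpa [pow_succ] using apply_two_pow_mul_add h1 (apply_two_mul_of_forall_pos h0 he)
    (apply_two_mul_add_one_of_forall_pos h0 h1 ho) n e r hr
end

section
/- For all integers e ≥ 0 and r with 0 ≤ r ≤ 2^e, the twisted Stern sequence satisfies t(2^e · n + r) = (−1)^e·(s(r)·t(n+1) + s(2^e − r)·t(n)) for n ≥ 1; in particular, taking n = 3 one gets t(2^e·(3+k)+r) = (−1)^e·(s(r)·t(k+4) + s(2^e−r)·t(k+3)) for all k ≥ 0. -/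
/-!
Induct on `e`. Writing `r = 2q` or `r = 2q + 1`, the argument `2^(e+1) n + r` is `2m` or
`2m + 1` with `m = 2^e n + q ≥ 1`, so one application of the recurrence for `t` reduces it to
`t m` and `t (m + 1)`, both known by induction. The Stern recurrence applied to `r` and to
`2^(e+1) - r` (of the same parity) regroups the result into the claimed form.
-/

section Stern

variable {s : ℕ → ℤ}

theorem stern_two_mul_sub_two_mul (he : ∀ n, s (2 * n) = s n) (m q : ℕ) :
    s (2 * m - 2 * q) = s (m - q) := by
  rw [← Nat.mul_sub, he]

theorem stern_two_mul_sub_two_mul_add_one (ho : ∀ n, s (2 * n + 1) = s n + s (n + 1))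
    {m q : ℕ} (hq : q < m) :
    s (2 * m - (2 * q + 1)) = s (m - (q + 1)) + s (m - q) := by
  rw [show 2 * m - (2 * q + 1) = 2 * (m - (q + 1)) + 1 by omega, ho,
    show m - (q + 1) + 1 = m - q by omega]

theorem twisted_stern_two_pow_mul_add (s t : ℕ → ℤ) (h0 : s 0 = 0) (h1 : s 1 = 1)
    (he : ∀ n, s (2 * n) = s n) (ho : ∀ n, s (2 * n + 1) = s n + s (n + 1))
    (te : ∀ n, 1 ≤ n → t (2 * n) = -t n)
    (todd : ∀ n, 1 ≤ n → t (2 * n + 1) = -t n - t (n + 1)) (e : ℕ) :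
    ∀ r ≤ 2 ^ e, ∀ n, 1 ≤ n →
      t (2 ^ e * n + r) = (-1) ^ e * (s r * t (n + 1) + s (2 ^ e - r) * t n) := by
  induction e with
  | zero =>
    intro r hr n _
    interval_cases r <;> simp [h0, h1]
  | succ e ih =>
    intro r hr n hn
    have hm : 1 ≤ 2 ^ e * n := Nat.one_le_iff_ne_zero.2 (by positivity)
    rw [pow_succ'] at hr ⊢
    obtain ⟨q, rfl | rfl⟩ := Nat.even_or_odd' r
    · have hq : q ≤ 2 ^ e := by omega
      rw [show 2 * 2 ^ e * n + 2 * q = 2 * (2 ^ e * n + q) by ring, te _ (le_add_right hm),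
        ih q hq n hn, he, stern_two_mul_sub_two_mul he]
      ring
    · have hq : q < 2 ^ e := by omega
      rw [show 2 * 2 ^ e * n + (2 * q + 1) = 2 * (2 ^ e * n + q) + 1 by ring,
        todd _ (le_add_right hm), add_assoc, ih q hq.le n hn,
        ih (q + 1) hq n hn, ho, stern_two_mul_sub_two_mul_add_one ho hq]
      ring

end Stern

theorem twisted_reznick_shift_general (s : ℕ → ℤ) (h0 : s 0 = 0) (h1 : s 1 = 1)
    (he : ∀ n, s (2 * n) = s n) (ho : ∀ n, s (2 * n + 1) = s n + s (n + 1))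
    (t : ℕ → ℤ)
    (te : ∀ n, 1 ≤ n → t (2 * n) = -t n) (todd : ∀ n, 1 ≤ n → t (2 * n + 1) = -t n - t (n + 1)) :
    (∀ e r : ℕ, r ≤ 2 ^ e → ∀ n : ℕ, 1 ≤ n →
      t (2 ^ e * n + r) = (-1) ^ e * (s r * t (n + 1) + s (2 ^ e - r) * t n)) ∧
    (∀ e r : ℕ, r ≤ 2 ^ e → ∀ k : ℕ,
      t (2 ^ e * (3 + k) + r)
        = (-1) ^ e * (s r * t (k + 4) + s (2 ^ e - r) * t (k + 3))) := by
  have shift := twisted_stern_two_pow_mul_add s t h0 h1 he ho te todd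
  refine ⟨shift, fun e r hr k => ?_⟩
  simpa only [add_comm 3 k, add_assoc] using shift e r hr (k + 3) (by omega)

theorem twisted_reznick_shift (s : ℕ → ℤ) (h0 : s 0 = 0) (h1 : s 1 = 1)
    (he : ∀ n, s (2 * n) = s n) (ho : ∀ n, s (2 * n + 1) = s n + s (n + 1))
    (t : ℕ → ℤ) (t0 : t 0 = 0) (t1 : t 1 = 1)
    (te : ∀ n, 1 ≤ n → t (2 * n) = -t n) (todd : ∀ n, 1 ≤ n → t (2 * n + 1) = -t n - t (n + 1)) :
    (∀ e r : ℕ, r ≤ 2 ^ e → ∀ n : ℕ, 1 ≤ n →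
      t (2 ^ e * n + r) = (-1) ^ e * (s r * t (n + 1) + s (2 ^ e - r) * t n)) ∧
    (∀ e r : ℕ, r ≤ 2 ^ e → ∀ k : ℕ,
      t (2 ^ e * (3 + k) + r)
        = (-1) ^ e * (s r * t (k + 4) + s (2 ^ e - r) * t (k + 3))) :=
  twisted_reznick_shift_general s h0 h1 he ho t te todd
end

section
/- Let v : ℕ → ℝ satisfy v(2n)=a·v(n) and v(2n+1)=b·v(n)+c·v(n+1) for all n ≥ n₀, and suppose there exist x₀, y₀ ≥ n₀ with v(x₀)·v(y₀+1) − v(y₀)·v(x₀+1) ≠ 0. Then for all e ≥ 0 and 0 ≤ r ≤ 2^e, the coefficients A, B with v(2^e·n+r)=A·v(n)+B·v(n+1) (for n ≥ n₀) are uniquely determined, and A = (v(y₀)·v(x₀+1) − v(x₀)·v(y₀+1))⁻¹·(v(x₀+1)·v(2^e·y₀+r) − v(y₀+1)·v(2^e·x₀+r)). -/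
/-!
Evaluated at `n = x₀` and `n = y₀`, the expansion is a 2 × 2 linear system in `A, B` whose
determinant `v x₀ * v (y₀ + 1) - v y₀ * v (x₀ + 1)` is nonzero, so Cramer's rule determines
both coefficients.
-/

section Cramer

variable {K : Type*} [Field K] {u₁ u₂ w₁ w₂ z₁ z₂ A B : K}

theorem cramer_fst (hdet : u₁ * w₂ - u₂ * w₁ ≠ 0)
    (h₁ : z₁ = A * u₁ + B * w₁) (h₂ : z₂ = A * u₂ + B * w₂) :
    A = (u₁ * w₂ - u₂ * w₁)⁻¹ * (w₂ * z₁ - w₁ * z₂) := by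
  rw [eq_inv_mul_iff_mul_eq₀ hdet]
  linear_combination w₁ * h₂ - w₂ * h₁

theorem cramer_snd (hdet : u₁ * w₂ - u₂ * w₁ ≠ 0)
    (h₁ : z₁ = A * u₁ + B * w₁) (h₂ : z₂ = A * u₂ + B * w₂) :
    B = (u₁ * w₂ - u₂ * w₁)⁻¹ * (u₁ * z₂ - u₂ * z₁) := by
  rw [eq_inv_mul_iff_mul_eq₀ hdet]
  linear_combination u₂ * h₁ - u₁ * h₂

end Cramer

theorem coeff_formula_general (v : ℕ → ℝ) (n₀ : ℕ)
    (x₀ y₀ : ℕ) (hx : n₀ ≤ x₀) (hy : n₀ ≤ y₀)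
    (hdet : v x₀ * v (y₀ + 1) - v y₀ * v (x₀ + 1) ≠ 0) :
    ∀ e r : ℕ, r ≤ 2 ^ e →
      (∀ A B A' B' : ℝ,
        (∀ n, n₀ ≤ n → v (2 ^ e * n + r) = A * v n + B * v (n + 1)) →
        (∀ n, n₀ ≤ n → v (2 ^ e * n + r) = A' * v n + B' * v (n + 1)) →
        A = A' ∧ B = B') ∧
      (∀ A B : ℝ,
        (∀ n, n₀ ≤ n → v (2 ^ e * n + r) = A * v n + B * v (n + 1)) →
        A = (v y₀ * v (x₀ + 1) - v x₀ * v (y₀ + 1))⁻¹ *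
              (v (x₀ + 1) * v (2 ^ e * y₀ + r) - v (y₀ + 1) * v (2 ^ e * x₀ + r))) := by
  intro e r _
  refine ⟨fun A B A' B' h h' => ?_, fun A B h => ?_⟩
  · constructor
    · rw [cramer_fst hdet (h x₀ hx) (h y₀ hy), cramer_fst hdet (h' x₀ hx) (h' y₀ hy)]
    · rw [cramer_snd hdet (h x₀ hx) (h y₀ hy), cramer_snd hdet (h' x₀ hx) (h' y₀ hy)]
  · rw [cramer_fst hdet (h x₀ hx) (h y₀ hy), ← neg_sub (v x₀ * _), ← neg_sub (v (y₀ + 1) * _),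
      inv_neg, neg_mul_neg]

theorem coeff_formula (v : ℕ → ℝ) (n₀ : ℕ) (a b c : ℝ)
    (he : ∀ n, n₀ ≤ n → v (2 * n) = a * v n)
    (ho : ∀ n, n₀ ≤ n → v (2 * n + 1) = b * v n + c * v (n + 1))
    (x₀ y₀ : ℕ) (hx : n₀ ≤ x₀) (hy : n₀ ≤ y₀)
    (hdet : v x₀ * v (y₀ + 1) - v y₀ * v (x₀ + 1) ≠ 0) :
    ∀ e r : ℕ, r ≤ 2 ^ e →
      (∀ A B A' B' : ℝ,
        (∀ n, n₀ ≤ n → v (2 ^ e * n + r) = A * v n + B * v (n + 1)) →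
        (∀ n, n₀ ≤ n → v (2 ^ e * n + r) = A' * v n + B' * v (n + 1)) →
        A = A' ∧ B = B') ∧
      (∀ A B : ℝ,
        (∀ n, n₀ ≤ n → v (2 ^ e * n + r) = A * v n + B * v (n + 1)) →
        A = (v y₀ * v (x₀ + 1) - v x₀ * v (y₀ + 1))⁻¹ *
              (v (x₀ + 1) * v (2 ^ e * y₀ + r) - v (y₀ + 1) * v (2 ^ e * x₀ + r))) :=
  coeff_formula_general v n₀ x₀ y₀ hx hy hdet
end

section
/- Define y : ℕ → ℕ by y(n) = P(n+1) where P is the block-complexity of the Thue-Morse sequence, which satisfies P(2n) = P(n) + P(n+1) and P(2n+1) = 2·P(n+1) for n ≥ 2. Then for all e ≥ 0 and 0 ≤ r ≤ 2^e there exist constants A, B (depending on e, r) such that y(2^e·n + r) = A·y(n) + B·y(n+1) for all n ≥ 2. -/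
/-!
Write `m = 2 ^ e * n + q`. Then `2 ^ (e + 1) * n + 2 * q = 2 * m` and
`2 ^ (e + 1) * n + (2 * q + 1) = 2 * m + 1`, so one application of the recurrence expresses the
value at level `e + 1` through the values at `2 ^ e * n + q` and `2 ^ e * n + (q + 1)`, which by
induction on `e` are already combinations of `y n` and `y (n + 1)` with coefficients independent
of `n`.
-/

theorem le_two_pow_mul {m n : ℕ} (h : m ≤ n) (e : ℕ) : m ≤ 2 ^ e * n :=
  h.trans (Nat.le_mul_of_pos_left n (Nat.two_pow_pos e))

section DyadicRecurrence

variable {R : Type*} [Semiring R] (y : ℕ → R) (n₀ : ℕ) {a b c : R}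

theorem exists_two_pow_succ_mul_add_even
    (he : ∀ n, n₀ ≤ n → y (2 * n) = a * y n) {e q : ℕ}
    (hq : ∃ A B : R, ∀ n, n₀ ≤ n → y (2 ^ e * n + q) = A * y n + B * y (n + 1)) :
    ∃ A B : R, ∀ n, n₀ ≤ n → y (2 ^ (e + 1) * n + 2 * q) = A * y n + B * y (n + 1) := by
  obtain ⟨A, B, hAB⟩ := hq
  refine ⟨a * A, a * B, fun n hn => ?_⟩
  have hm : n₀ ≤ 2 ^ e * n + q := le_add_right (le_two_pow_mul hn e)
  calc y (2 ^ (e + 1) * n + 2 * q) = y (2 * (2 ^ e * n + q)) := by ring_nf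
    _ = a * (A * y n + B * y (n + 1)) := by rw [he _ hm, hAB n hn]
    _ = a * A * y n + a * B * y (n + 1) := by simp only [mul_add, mul_assoc]

theorem exists_two_pow_succ_mul_add_odd
    (ho : ∀ n, n₀ ≤ n → y (2 * n + 1) = b * y n + c * y (n + 1)) {e q : ℕ}
    (hq : ∃ A B : R, ∀ n, n₀ ≤ n → y (2 ^ e * n + q) = A * y n + B * y (n + 1))
    (hq' : ∃ A B : R, ∀ n, n₀ ≤ n → y (2 ^ e * n + (q + 1)) = A * y n + B * y (n + 1)) :
    ∃ A B : R, ∀ n, n₀ ≤ n →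
      y (2 ^ (e + 1) * n + (2 * q + 1)) = A * y n + B * y (n + 1) := by
  obtain ⟨A, B, hAB⟩ := hq
  obtain ⟨A', B', hAB'⟩ := hq'
  refine ⟨b * A + c * A', b * B + c * B', fun n hn => ?_⟩
  have hm : n₀ ≤ 2 ^ e * n + q := le_add_right (le_two_pow_mul hn e)
  calc y (2 ^ (e + 1) * n + (2 * q + 1)) = y (2 * (2 ^ e * n + q) + 1) := by ring_nf
    _ = b * (A * y n + B * y (n + 1)) + c * (A' * y n + B' * y (n + 1)) := by
      rw [ho _ hm, hAB n hn, add_assoc, hAB' n hn]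
    _ = (b * A + c * A') * y n + (b * B + c * B') * y (n + 1) := by
      simp only [mul_add, add_mul, mul_assoc]; abel

theorem exists_two_pow_mul_add_eq
    (he : ∀ n, n₀ ≤ n → y (2 * n) = a * y n)
    (ho : ∀ n, n₀ ≤ n → y (2 * n + 1) = b * y n + c * y (n + 1)) (e : ℕ) :
    ∀ r ≤ 2 ^ e, ∃ A B : R, ∀ n, n₀ ≤ n →
      y (2 ^ e * n + r) = A * y n + B * y (n + 1) := by
  induction e with
  | zero =>
    intro r hr
    interval_cases r
    · exact ⟨1, 0, fun n _ => by simp⟩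
    · exact ⟨0, 1, fun n _ => by simp⟩
  | succ e ih =>
    intro r hr
    obtain ⟨q, rfl | rfl⟩ := Nat.even_or_odd' r
    · exact exists_two_pow_succ_mul_add_even y n₀ he (ih q (by omega))
    · exact exists_two_pow_succ_mul_add_odd y n₀ ho (ih q (by omega)) (ih (q + 1) (by omega))

end DyadicRecurrence

theorem thue_morse_complexity_general (y : ℕ → ℕ)
    (he : ∀ n, 2 ≤ n → y (2 * n) = 2 * y n)
    (ho : ∀ n, 2 ≤ n → y (2 * n + 1) = y n + y (n + 1)) :
    ∀ e r : ℕ, r ≤ 2 ^ e → ∃ A B : ℕ, ∀ n, 2 ≤ n →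
      y (2 ^ e * n + r) = A * y n + B * y (n + 1) :=
  fun e => exists_two_pow_mul_add_eq y 2 he (b := 1) (c := 1) (by simpa using ho) e

theorem thue_morse_complexity (y : ℕ → ℕ) (h0 : y 0 = 2) (h1 : y 1 = 4)
    (he : ∀ n, 2 ≤ n → y (2 * n) = 2 * y n)
    (ho : ∀ n, 2 ≤ n → y (2 * n + 1) = y n + y (n + 1)) :
    ∀ e r : ℕ, r ≤ 2 ^ e → ∃ A B : ℕ, ∀ n, 2 ≤ n →
      y (2 ^ e * n + r) = A * y n + B * y (n + 1) :=
  thue_morse_complexity_general y he ho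
end
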